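/- Let λ > 0, ε > 0, and let u : ℤ^d → ℝ satisfy Σ_{x ∈ ℤ^d} |u(x)| < ∞, u(−x) = u(x) for all x, and u(0) = u(e₁) = u(−e₁). Then 2u(0) − λ(Σ_{x ∈ ℤ^d} u(x)² + u(0)²) − ((1+ε)/2) Σ_{x ∈ ℤ^d} (u(x + e₁) − u(x))² − (ε/2) Σ_{j=2}^{d} Σ_{x ∈ ℤ^d} (u(x + e_j) − u(x))² ≥ ∫_{[0,1]^d} ( 2𝓕u(p) − (2λ + (1+ε) d ζ_d(p)) 𝓕u(p)² ) dp. (This is the Fourier-space lower bound for the symmetric part of the variational formula, for the initial measure with p₁ = 1.) -/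

import Mathlib

open MeasureTheory Real

noncomputable section

/-- The unit cube `[0,1]^d ⊂ ℝ^d`. -/
def cube (d : ℕ) : Set (Fin d → ℝ) := Set.univ.pi fun _ => Set.Icc 0 1

/-- The symbol `ζ_d(p) = 1 − (1/d) Σ_{j=1}^d cos(2π p_j)`. -/
def zeta (d : ℕ) (p : Fin d → ℝ) : ℝ :=
  1 - (1 / (d : ℝ)) * ∑ j, Real.cos (2 * π * p j)

/-- The (real) Fourier transform of a summable even `u : ℤ^d → ℝ`:
`𝓕u(p) = Σ_{x ∈ ℤ^d} u(x) cos(2π⟨p,x⟩)`. -/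
def Ftrans {d : ℕ} (u : (Fin d → ℤ) → ℝ) (p : Fin d → ℝ) : ℝ :=
  ∑' x : Fin d → ℤ, u x * Real.cos (2 * π * ∑ j, p j * (x j : ℝ))

namespace SymmAux
variable {d : ℕ}

def ch (p : Fin d → ℝ) (x : Fin d → ℤ) : ℝ := Real.cos (2 * π * ∑ j, p j * (x j : ℝ))

lemma continuous_ch (x : Fin d → ℤ) : Continuous fun p : Fin d → ℝ => ch p x := by
  apply Real.continuous_cos.comp
  exact continuous_const.mul
    (continuous_finset_sum _ fun j _ => (continuous_apply j).mul continuous_const)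

lemma abs_ch_le (p : Fin d → ℝ) (x : Fin d → ℤ) : |ch p x| ≤ 1 := Real.abs_cos_le_one _

lemma arg_add (p : Fin d → ℝ) (x y : Fin d → ℤ) :
    2 * π * ∑ j, p j * (((x + y) j : ℤ) : ℝ)
      = 2 * π * ∑ j, p j * (x j : ℝ) + 2 * π * ∑ j, p j * (y j : ℝ) := by
  simp only [Pi.add_apply, Int.cast_add, mul_add, Finset.sum_add_distrib]

lemma arg_sub (p : Fin d → ℝ) (x y : Fin d → ℤ) :
    2 * π * ∑ j, p j * (((x - y) j : ℤ) : ℝ)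
      = 2 * π * ∑ j, p j * (x j : ℝ) - 2 * π * ∑ j, p j * (y j : ℝ) := by
  simp only [Pi.sub_apply, Int.cast_sub, mul_sub, Finset.sum_sub_distrib]

lemma ch_mul (p : Fin d → ℝ) (x y : Fin d → ℤ) :
    ch p x * ch p y = (ch p (x + y) + ch p (x - y)) / 2 := by
  unfold ch
  rw [arg_add, arg_sub, Real.cos_add, Real.cos_sub]
  ring

lemma ch_triple (p : Fin d → ℝ) (z x y : Fin d → ℤ) :
    ch p z * (ch p x * ch p y) =
      (ch p (z + (x + y)) + ch p (z - (x + y)) + ch p (z + (x - y)) + ch p (z - (x - y))) / 4 := by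
  rw [ch_mul p x y]
  linear_combination (ch_mul p z (x + y)) / 2 + (ch_mul p z (x - y)) / 2

lemma measurableSet_cube : MeasurableSet (cube d) :=
  MeasurableSet.univ_pi fun _ => measurableSet_Icc

lemma isCompact_cube : IsCompact (cube d) := isCompact_univ_pi fun _ => isCompact_Icc

lemma volume_cube : volume (cube d) = 1 := by
  rw [cube, volume_pi_pi]
  simp [Real.volume_Icc]

lemma integral_exp_Icc (n : ℤ) :
    ∫ t in Set.Icc (0:ℝ) 1, Complex.exp (2 * π * Complex.I * n * t) =
      if n = 0 then 1 else 0 := by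
  rcases eq_or_ne n 0 with h | h
  · subst h
    simp [MeasureTheory.setIntegral_const, Real.volume_Icc]
  · rw [if_neg h, MeasureTheory.integral_Icc_eq_integral_Ioc,
      ← intervalIntegral.integral_of_le (zero_le_one)]
    have hc : (2 * (π:ℂ) * Complex.I * n) ≠ 0 := by
      simp [Real.pi_ne_zero, Complex.I_ne_zero, h]
    rw [integral_exp_mul_complex hc]
    have h1 : (2 * (π:ℂ) * Complex.I * n) * (1:ℝ) = (n:ℂ) * (2 * π * Complex.I) := by
      push_cast; ring
    have h0 : (2 * (π:ℂ) * Complex.I * n) * (0:ℝ) = 0 := by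
      push_cast; ring
    rw [h1, h0, Complex.exp_int_mul_two_pi_mul_I, Complex.exp_zero, sub_self, zero_div]


lemma prod_indicator (z : Fin d → ℤ) (p : Fin d → ℝ) :
    (cube d).indicator (fun p => ∏ j, Complex.exp (2 * π * Complex.I * (z j) * (p j))) p
      = ∏ j, (Set.Icc (0:ℝ) 1).indicator
          (fun t => Complex.exp (2 * π * Complex.I * (z j) * t)) (p j) := by
  by_cases hp : p ∈ cube d
  · rw [Set.indicator_of_mem hp]
    exact Finset.prod_congr rfl fun j _ =>
      (Set.indicator_of_mem (hp j (Set.mem_univ j))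
        (fun t => Complex.exp (2 * π * Complex.I * (z j) * t))).symm
  · rw [Set.indicator_of_notMem hp]
    rw [cube, Set.mem_pi] at hp
    push_neg at hp
    obtain ⟨j, -, hj⟩ := hp
    exact (Finset.prod_eq_zero (Finset.mem_univ j) (Set.indicator_of_notMem hj _)).symm

lemma integral_ch (z : Fin d → ℤ) :
    ∫ p in cube d, ch p z = if z = 0 then 1 else 0 := by
  have hre : ∀ p : Fin d → ℝ,
      ch p z = (∏ j, Complex.exp (2 * π * Complex.I * (z j) * (p j))).re := by
    intro p
    rw [← Complex.exp_sum]
    have harg : (∑ j, 2 * (π:ℂ) * Complex.I * (z j) * (p j))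
        = ((2 * π * ∑ j, p j * (z j : ℝ) : ℝ) : ℂ) * Complex.I := by
      push_cast
      rw [Finset.mul_sum, Finset.sum_mul]
      exact Finset.sum_congr rfl fun j _ => by ring
    rw [harg, Complex.exp_ofReal_mul_I_re]
    rfl
  have hcont : Continuous fun p : Fin d → ℝ =>
      ∏ j, Complex.exp (2 * π * Complex.I * (z j) * (p j)) := by
    apply continuous_finset_prod
    intro j _
    exact Complex.continuous_exp.comp (continuous_const.mul
      ((Complex.continuous_ofReal.comp (continuous_apply j))))
  have hint : IntegrableOn (fun p : Fin d → ℝ =>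
      ∏ j, Complex.exp (2 * π * Complex.I * (z j) * (p j))) (cube d) :=
    hcont.continuousOn.integrableOn_compact isCompact_cube
  have step1 : ∫ p in cube d, ch p z
      = (∫ p in cube d, ∏ j, Complex.exp (2 * π * Complex.I * (z j) * (p j))).re := by
    have hcomm := (Complex.reCLM).integral_comp_comm hint
    simp only [Complex.reCLM_apply] at hcomm
    rw [← hcomm]
    exact integral_congr_ae (Filter.Eventually.of_forall fun p => hre p)
  have step2 : ∫ p in cube d, ∏ j, Complex.exp (2 * π * Complex.I * (z j) * (p j))
      = ∏ j, if z j = 0 then (1:ℂ) else 0 := by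
    rw [← MeasureTheory.integral_indicator measurableSet_cube]
    rw [show (cube d).indicator (fun p => ∏ j, Complex.exp (2 * π * Complex.I * (z j) * (p j)))
        = fun p => ∏ j, (Set.Icc (0:ℝ) 1).indicator
            (fun t => Complex.exp (2 * π * Complex.I * (z j) * t)) (p j)
      from funext fun p => prod_indicator z p]
    beta_reduce
    rw [MeasureTheory.volume_pi, MeasureTheory.integral_fintype_prod_eq_prod
      (fun j t => (Set.Icc (0:ℝ) 1).indicator
        (fun s => Complex.exp (2 * π * Complex.I * (z j) * s)) t)]
    refine Finset.prod_congr rfl fun j _ => ?_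
    rw [MeasureTheory.integral_indicator measurableSet_Icc]
    exact integral_exp_Icc (z j)
  rw [step1, step2]
  rcases eq_or_ne z 0 with h | h
  · subst h
    simp
  · obtain ⟨j, hj⟩ := Function.ne_iff.mp h
    rw [Finset.prod_eq_zero (Finset.mem_univ j) (by simpa using hj)]
    simp [h]


abbrev P (d : ℕ) := Fin d → ℤ

def Ft {d : ℕ} (u : P d → ℝ) (p : Fin d → ℝ) : ℝ := ∑' x : P d, u x * ch p x

variable {u : P d → ℝ}

lemma norm_term_le (p : Fin d → ℝ) (x : P d) : ‖u x * ch p x‖ ≤ |u x| := by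
  rw [Real.norm_eq_abs, abs_mul]
  exact mul_le_of_le_one_right (abs_nonneg _) (abs_ch_le p x)

lemma summable_term_norm (hsum : Summable fun x : P d => |u x|) (p : Fin d → ℝ) :
    Summable fun x : P d => ‖u x * ch p x‖ :=
  Summable.of_nonneg_of_le (fun _ => norm_nonneg _) (fun x => norm_term_le p x) hsum

lemma continuous_Ft (hsum : Summable fun x : P d => |u x|) : Continuous (Ft u) :=
  continuous_tsum (fun x => continuous_const.mul (continuous_ch x)) hsum
    (fun x p => norm_term_le p x)

lemma summable_pair (hsum : Summable fun x : P d => |u x|) :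
    Summable fun q : P d × P d => |u q.1| * |u q.2| :=
  hsum.mul_of_nonneg hsum (fun _ => abs_nonneg _) (fun _ => abs_nonneg _)

lemma Ft_sq (hsum : Summable fun x : P d => |u x|) (p : Fin d → ℝ) :
    (Ft u p) ^ 2 = ∑' q : P d × P d, (u q.1 * ch p q.1) * (u q.2 * ch p q.2) := by
  rw [sq, Ft, tsum_mul_tsum_of_summable_norm (summable_term_norm hsum p)
    (summable_term_norm hsum p)]

lemma tsum_pair_ite (hsum : Summable fun x : P d => |u x|) (σ : P d → P d) :
    ∑' q : P d × P d, (if q.2 = σ q.1 then u q.1 * u q.2 / 4 else 0)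
      = (∑' x : P d, u x * u (σ x)) / 4 := by
  have hs : Summable fun q : P d × P d => (if q.2 = σ q.1 then u q.1 * u q.2 / 4 else 0) := by
    apply Summable.of_abs
    apply Summable.of_nonneg_of_le (fun _ => abs_nonneg _) _ (summable_pair hsum)
    intro q
    by_cases h : q.2 = σ q.1
    · rw [if_pos h, abs_div]
      calc |u q.1 * u q.2| / |(4:ℝ)| ≤ |u q.1 * u q.2| := by
            rw [abs_mul]
            apply div_le_self (mul_nonneg (abs_nonneg _) (abs_nonneg _))
            norm_num
        _ = |u q.1| * |u q.2| := abs_mul _ _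
    · rw [if_neg h]
      simpa using mul_nonneg (abs_nonneg (u q.1)) (abs_nonneg (u q.2))
  rw [Summable.tsum_prod' hs (fun x => hs.prod_factor x), ← tsum_div_const]
  refine tsum_congr fun x => ?_
  have : ∀ y : P d, (if y = σ x then u x * u y / 4 else 0)
      = (if y = σ x then u x * u (σ x) / 4 else 0) := by
    intro y
    by_cases h : y = σ x <;> simp [h]
  rw [tsum_congr this, tsum_ite_eq (σ x) (fun _ => u x * u (σ x) / 4)]

lemma integrableOn_cube {f : (Fin d → ℝ) → ℝ} (hf : Continuous f) :
    IntegrableOn f (cube d) := hf.continuousOn.integrableOn_compact isCompact_cube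

lemma integral_Ft (hsum : Summable fun x : P d => |u x|) :
    ∫ p in cube d, Ft u p = u 0 := by
  have hswap := MeasureTheory.integral_tsum_of_summable_integral_norm
    (μ := volume.restrict (cube d)) (F := fun (x : P d) (p : Fin d → ℝ) => u x * ch p x)
    (fun x => integrableOn_cube (continuous_const.mul (continuous_ch x)))
    ?_
  · have hval : ∀ x : P d, (∫ p in cube d, u x * ch p x) = (if x = 0 then u 0 else 0) := by
      intro x
      rw [MeasureTheory.integral_const_mul, integral_ch x]
      by_cases h : x = 0 <;> simp [h]
    calc ∫ p in cube d, Ft u p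
        = ∑' x : P d, ∫ p in cube d, u x * ch p x := hswap.symm
      _ = u 0 := by rw [tsum_congr hval, tsum_ite_eq (0 : P d) (fun _ => u 0)]
  · apply Summable.of_nonneg_of_le
      (fun x => integral_nonneg fun p => norm_nonneg _) _ hsum
    intro x
    calc ∫ p in cube d, ‖u x * ch p x‖
        ≤ ∫ p in cube d, |u x| := by
          apply integral_mono (integrableOn_cube
            ((continuous_const.mul (continuous_ch x)).norm)) _ (fun p => norm_term_le p x)
          exact integrableOn_const (by rw [volume_cube]; norm_num)
      _ = |u x| := by rw [MeasureTheory.setIntegral_const, measureReal_def, volume_cube]; simp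

/-- The value of `∫ ch p z * (ch p x * ch p y)`. -/
lemma integral_ch_triple (z x y : P d) :
    ∫ p in cube d, ch p z * (ch p x * ch p y)
      = ((if z + (x + y) = 0 then (1:ℝ) else 0) + (if z - (x + y) = 0 then (1:ℝ) else 0)
          + (if z + (x - y) = 0 then (1:ℝ) else 0) + (if z - (x - y) = 0 then (1:ℝ) else 0)) / 4 := by
  have hrw : ∀ p : Fin d → ℝ, ch p z * (ch p x * ch p y)
      = (ch p (z + (x + y)) + ch p (z - (x + y)) + ch p (z + (x - y)) + ch p (z - (x - y))) / 4 :=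
    fun p => ch_triple p z x y
  rw [integral_congr_ae (Filter.Eventually.of_forall hrw)]
  have hi : ∀ w : P d, IntegrableOn (fun p => ch p w) (cube d) :=
    fun w => integrableOn_cube (continuous_ch w)
  rw [integral_div]
  have hA : IntegrableOn (fun p => ch p (z + (x + y)) + ch p (z - (x + y)) + ch p (z + (x - y)))
      (cube d) := ((hi _).add (hi _)).add (hi _)
  have hB : IntegrableOn (fun p => ch p (z + (x + y)) + ch p (z - (x + y))) (cube d) :=
    (hi _).add (hi _)
  rw [MeasureTheory.integral_add hA (hi _), MeasureTheory.integral_add hB (hi _),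
    MeasureTheory.integral_add (hi _) (hi _)]
  rw [integral_ch, integral_ch, integral_ch, integral_ch]

lemma tsum_even_shift (hsum : Summable fun x : P d => |u x|)
    (heven : ∀ x : P d, u (-x) = u x) (z : P d) :
    ∑' x : P d, u x * u (x - z) = ∑' x : P d, u x * u (x + z) := by
  have h2 := (Equiv.addRight z).tsum_eq (fun x : P d => u x * u (x - z))
  simp only [Equiv.coe_addRight, add_sub_cancel_right] at h2
  rw [← h2]
  exact tsum_congr fun x => mul_comm _ _

/-- Main identity: `∫ ch p z * (Ft u p)^2 = ∑' x, u x * u (x + z)`. -/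
lemma integral_ch_mul_sq (hsum : Summable fun x : P d => |u x|)
    (heven : ∀ x : P d, u (-x) = u x) (z : P d) :
    ∫ p in cube d, ch p z * (Ft u p) ^ 2 = ∑' x : P d, u x * u (x + z) := by
  classical
  set F : P d × P d → (Fin d → ℝ) → ℝ :=
    fun q p => ch p z * ((u q.1 * ch p q.1) * (u q.2 * ch p q.2)) with hF
  have hptwise : ∀ p : Fin d → ℝ, ch p z * (Ft u p) ^ 2 = ∑' q : P d × P d, F q p := by
    intro p
    rw [Ft_sq hsum p, tsum_mul_left]
  have hFcont : ∀ q : P d × P d, Continuous (F q) := by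
    intro q
    exact (continuous_ch z).mul (((continuous_const.mul (continuous_ch q.1))).mul
      ((continuous_const.mul (continuous_ch q.2))))
  have hFbound : ∀ (q : P d × P d) (p : Fin d → ℝ), ‖F q p‖ ≤ |u q.1| * |u q.2| := by
    intro q p
    rw [hF]
    simp only [Real.norm_eq_abs, abs_mul]
    calc |ch p z| * (|u q.1| * |ch p q.1| * (|u q.2| * |ch p q.2|))
        ≤ 1 * (|u q.1| * 1 * (|u q.2| * 1)) := by
          gcongr <;> first | exact abs_ch_le _ _ | exact abs_nonneg _
      _ = |u q.1| * |u q.2| := by ring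
  have hswap := MeasureTheory.integral_tsum_of_summable_integral_norm
    (μ := volume.restrict (cube d)) (F := F)
    (fun q => integrableOn_cube (hFcont q))
    (by
      apply Summable.of_nonneg_of_le
        (fun q => integral_nonneg fun p => norm_nonneg _) _ (summable_pair hsum)
      intro q
      calc ∫ p in cube d, ‖F q p‖
          ≤ ∫ p in cube d, |u q.1| * |u q.2| := by
            apply integral_mono (integrableOn_cube (hFcont q).norm) _ (hFbound q)
            exact integrableOn_const (by rw [volume_cube]; norm_num)
        _ = |u q.1| * |u q.2| := by rw [MeasureTheory.setIntegral_const, measureReal_def, volume_cube]; simp)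
  rw [integral_congr_ae (Filter.Eventually.of_forall hptwise), ← hswap]
  -- value of each integral
  have hval : ∀ q : P d × P d, (∫ p in cube d, F q p)
      = (if q.2 = (-z - q.1) then u q.1 * u q.2 / 4 else 0)
        + (if q.2 = (z - q.1) then u q.1 * u q.2 / 4 else 0)
        + (if q.2 = (q.1 + z) then u q.1 * u q.2 / 4 else 0)
        + (if q.2 = (q.1 - z) then u q.1 * u q.2 / 4 else 0) := by
    intro q
    have : (∫ p in cube d, F q p) = (u q.1 * u q.2) * ∫ p in cube d, ch p z * (ch p q.1 * ch p q.2) := by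
      rw [← MeasureTheory.integral_const_mul]
      exact integral_congr_ae (Filter.Eventually.of_forall fun p => by rw [hF]; ring)
    rw [this, integral_ch_triple]
    have e1 : (z + (q.1 + q.2) = 0) ↔ (q.2 = -z - q.1) := by
      simp only [funext_iff, Pi.add_apply, Pi.zero_apply, Pi.neg_apply, Pi.sub_apply]
      exact forall_congr' fun j => by omega
    have e2 : (z - (q.1 + q.2) = 0) ↔ (q.2 = z - q.1) := by
      simp only [funext_iff, Pi.add_apply, Pi.zero_apply, Pi.sub_apply]
      exact forall_congr' fun j => by omega
    have e3 : (z + (q.1 - q.2) = 0) ↔ (q.2 = q.1 + z) := by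
      simp only [funext_iff, Pi.add_apply, Pi.zero_apply, Pi.sub_apply]
      exact forall_congr' fun j => by omega
    have e4 : (z - (q.1 - q.2) = 0) ↔ (q.2 = q.1 - z) := by
      simp only [funext_iff, Pi.add_apply, Pi.zero_apply, Pi.sub_apply]
      exact forall_congr' fun j => by omega
    rw [if_congr e1 rfl rfl, if_congr e2 rfl rfl, if_congr e3 rfl rfl, if_congr e4 rfl rfl]
    have keyite : ∀ (c : Prop) [Decidable c] (a : ℝ),
        (if c then a / 4 else 0) = a * (if c then (1:ℝ) else 0) / 4 := by
      intro c _ a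
      split <;> simp
    rw [keyite, keyite, keyite, keyite]
    ring
  rw [tsum_congr hval]
  have hsummable_ite : ∀ σ : P d → P d,
      Summable fun q : P d × P d => (if q.2 = σ q.1 then u q.1 * u q.2 / 4 else 0) := by
    intro σ
    apply Summable.of_abs
    apply Summable.of_nonneg_of_le (fun _ => abs_nonneg _) _ (summable_pair hsum)
    intro q
    by_cases h : q.2 = σ q.1
    · rw [if_pos h, abs_div]
      calc |u q.1 * u q.2| / |(4:ℝ)| ≤ |u q.1 * u q.2| := by
            rw [abs_mul]
            apply div_le_self (mul_nonneg (abs_nonneg _) (abs_nonneg _))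
            norm_num
        _ = |u q.1| * |u q.2| := abs_mul _ _
    · rw [if_neg h]
      simpa using mul_nonneg (abs_nonneg (u q.1)) (abs_nonneg (u q.2))
  have s1 : Summable fun q : P d × P d => (if q.2 = -z - q.1 then u q.1 * u q.2 / 4 else 0) :=
    hsummable_ite fun x => -z - x
  have s2 : Summable fun q : P d × P d => (if q.2 = z - q.1 then u q.1 * u q.2 / 4 else 0) :=
    hsummable_ite fun x => z - x
  have s3 : Summable fun q : P d × P d => (if q.2 = q.1 + z then u q.1 * u q.2 / 4 else 0) :=
    hsummable_ite fun x => x + z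
  have s4 : Summable fun q : P d × P d => (if q.2 = q.1 - z then u q.1 * u q.2 / 4 else 0) :=
    hsummable_ite fun x => x - z
  have s12 : Summable fun q : P d × P d =>
      ((if q.2 = -z - q.1 then u q.1 * u q.2 / 4 else 0)
        + (if q.2 = z - q.1 then u q.1 * u q.2 / 4 else 0)) := s1.add s2
  have s123 : Summable fun q : P d × P d =>
      ((if q.2 = -z - q.1 then u q.1 * u q.2 / 4 else 0)
        + (if q.2 = z - q.1 then u q.1 * u q.2 / 4 else 0)
        + (if q.2 = q.1 + z then u q.1 * u q.2 / 4 else 0)) := s12.add s3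
  rw [Summable.tsum_add s123 s4, Summable.tsum_add s12 s3, Summable.tsum_add s1 s2]
  rw [tsum_pair_ite hsum (fun x => -z - x), tsum_pair_ite hsum (fun x => z - x),
    tsum_pair_ite hsum (fun x => x + z), tsum_pair_ite hsum (fun x => x - z)]
  have i1 : ∑' x : P d, u x * u (-z - x) = ∑' x : P d, u x * u (x + z) := by
    refine tsum_congr fun x => ?_
    rw [show (-z - x : P d) = -(x + z) by abel, heven]
  have i2 : ∑' x : P d, u x * u (z - x) = ∑' x : P d, u x * u (x + z) := by
    rw [← tsum_even_shift hsum heven z]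
    refine tsum_congr fun x => ?_
    rw [show (z - x : P d) = -(x - z) by abel, heven]
  have i4 : ∑' x : P d, u x * u (x - z) = ∑' x : P d, u x * u (x + z) :=
    tsum_even_shift hsum heven z
  rw [i1, i2, i4]
  ring


lemma ch_zero (p : Fin d → ℝ) : ch p (0 : P d) = 1 := by
  unfold ch
  simp

lemma ch_single (p : Fin d → ℝ) (j : Fin d) :
    ch p (Pi.single j 1 : P d) = Real.cos (2 * π * p j) := by
  unfold ch
  congr 1
  congr 1
  rw [Finset.sum_eq_single j]
  · simp
  · intro k _ hk
    simp [Pi.single_apply, hk]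
  · simp

lemma integral_Ft_sq (hsum : Summable fun x : P d => |u x|)
    (heven : ∀ x : P d, u (-x) = u x) :
    ∫ p in cube d, (Ft u p) ^ 2 = ∑' x : P d, u x ^ 2 := by
  have h := integral_ch_mul_sq hsum heven 0
  have h1 : ∀ p : Fin d → ℝ, (Ft u p) ^ 2 = ch p (0 : P d) * (Ft u p) ^ 2 := by
    intro p
    rw [ch_zero, one_mul]
  rw [integral_congr_ae (Filter.Eventually.of_forall h1), h]
  exact tsum_congr fun x => by rw [add_zero, sq]

lemma bound_of_summable_abs (hsum : Summable fun x : P d => |u x|) (y : P d) :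
    |u y| ≤ ∑' x : P d, |u x| :=
  Summable.le_tsum hsum y fun _ _ => abs_nonneg _

lemma summable_sq (hsum : Summable fun x : P d => |u x|) :
    Summable fun x : P d => u x ^ 2 := by
  apply Summable.of_abs
  apply Summable.of_nonneg_of_le (fun _ => abs_nonneg _) _ (hsum.mul_right (∑' x : P d, |u x|))
  intro x
  rw [sq, abs_mul]
  exact mul_le_mul_of_nonneg_left (bound_of_summable_abs hsum x) (abs_nonneg _)

lemma summable_mul_shift (hsum : Summable fun x : P d => |u x|) (z : P d) :
    Summable fun x : P d => u x * u (x + z) := by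
  apply Summable.of_abs
  apply Summable.of_nonneg_of_le (fun _ => abs_nonneg _) _ (hsum.mul_right (∑' x : P d, |u x|))
  intro x
  rw [abs_mul]
  exact mul_le_mul_of_nonneg_left (bound_of_summable_abs hsum (x + z)) (abs_nonneg _)

lemma grad_identity (hsum : Summable fun x : P d => |u x|) (z : P d) :
    ∑' x : P d, (u (x + z) - u x) ^ 2
      = 2 * (∑' x : P d, u x ^ 2) - 2 * ∑' x : P d, u x * u (x + z) := by
  have hsq := summable_sq hsum
  have hshift : Summable fun x : P d => u (x + z) ^ 2 :=
    ((Equiv.addRight z).summable_iff (f := fun x : P d => u x ^ 2)).mpr hsq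
  have hmul := summable_mul_shift hsum z
  have hpt : ∀ x : P d, (u (x + z) - u x) ^ 2
      = (u (x + z) ^ 2 + u x ^ 2) - 2 * (u x * u (x + z)) := fun x => by ring
  rw [tsum_congr hpt, Summable.tsum_sub (hshift.add hsq) (hmul.mul_left 2),
    Summable.tsum_add hshift hsq, tsum_mul_left]
  have htr : ∑' x : P d, u (x + z) ^ 2 = ∑' x : P d, u x ^ 2 :=
    (Equiv.addRight z).tsum_eq (fun x : P d => u x ^ 2)
  rw [htr]
  ring


lemma zeta_expand [NeZero d] (p : Fin d → ℝ) :
    (d : ℝ) * zeta d p = ∑ j, (1 - ch p (Pi.single j 1 : P d)) := by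
  have hd : (d:ℝ) ≠ 0 := Nat.cast_ne_zero.mpr (NeZero.ne d)
  unfold zeta
  simp only [ch_single]
  rw [Finset.sum_sub_distrib, Finset.sum_const, Finset.card_univ, Fintype.card_fin,
    nsmul_eq_mul, mul_one]
  field_simp

lemma continuous_zeta : Continuous (zeta d) := by
  unfold zeta
  exact continuous_const.sub (continuous_const.mul (continuous_finset_sum _ fun j _ =>
    Real.continuous_cos.comp (continuous_const.mul (continuous_apply j))))

end SymmAux

open SymmAux in
/-- Fourier-space lower bound for the symmetric part of the variational formula
(initial measure with `p₁ = 1`): for `λ, ε > 0` and `u` summable, even, with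
`u(0) = u(e₁) = u(−e₁)`,
`2u(0) − λ(Σ_x u(x)² + u(0)²) − ((1+ε)/2)Σ_x (u(x+e₁) − u(x))²
  − (ε/2)Σ_{j=2}^d Σ_x (u(x+e_j) − u(x))²
  ≥ ∫_{[0,1]^d} (2𝓕u(p) − (2λ + (1+ε)dζ_d(p))𝓕u(p)²) dp`. -/
theorem symmetric_part_fourier_bound (d : ℕ) [NeZero d]
    (lam ε : ℝ) (hlam : 0 < lam) (hε : 0 < ε)
    (u : (Fin d → ℤ) → ℝ)
    (hsum : Summable fun x : Fin d → ℤ => |u x|)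
    (heven : ∀ x : Fin d → ℤ, u (-x) = u x)
    (hplus : u 0 = u (Pi.single (0 : Fin d) 1))
    (hminus : u 0 = u (Pi.single (0 : Fin d) (-1))) :
    (∫ p in cube d,
        (2 * Ftrans u p - (2 * lam + (1 + ε) * (d : ℝ) * zeta d p) * (Ftrans u p) ^ 2))
      ≤ 2 * u 0 - lam * ((∑' x : Fin d → ℤ, u x ^ 2) + u 0 ^ 2)
        - ((1 + ε) / 2) * (∑' x : Fin d → ℤ, (u (x + Pi.single (0 : Fin d) 1) - u x) ^ 2)
        - (ε / 2) * ∑ j ∈ Finset.univ.erase (0 : Fin d),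
            ∑' x : Fin d → ℤ, (u (x + Pi.single j 1) - u x) ^ 2 := by
  classical
  set S : ℝ := ∑' x : Fin d → ℤ, u x ^ 2 with hS
  set T : Fin d → ℝ := fun j => ∑' x : Fin d → ℤ, u x * u (x + Pi.single j 1) with hT
  set G : Fin d → ℝ := fun j => ∑' x : Fin d → ℤ, (u (x + Pi.single j 1) - u x) ^ 2 with hG
  have hGT : ∀ j, G j = 2 * S - 2 * T j := fun j => grad_identity hsum (Pi.single j 1)
  have hFt_cont : Continuous (Ft u) := continuous_Ft hsum
  have hsq_int : IntegrableOn (fun p => (Ft u p) ^ 2) (cube d) :=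
    integrableOn_cube (hFt_cont.pow 2)
  have hch_int : ∀ j : Fin d, IntegrableOn
      (fun p => ch p (Pi.single j 1 : P d) * (Ft u p) ^ 2) (cube d) :=
    fun j => integrableOn_cube ((continuous_ch _).mul (hFt_cont.pow 2))
  have hterm_int : ∀ j : Fin d, IntegrableOn
      (fun p => (Ft u p) ^ 2 - ch p (Pi.single j 1 : P d) * (Ft u p) ^ 2) (cube d) :=
    fun j => hsq_int.sub (hch_int j)
  -- rewrite the integrand
  have hIntegrand : ∀ p : Fin d → ℝ,
      2 * Ftrans u p - (2 * lam + (1 + ε) * (d : ℝ) * zeta d p) * (Ftrans u p) ^ 2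
        = (2 * Ft u p - 2 * lam * (Ft u p) ^ 2)
          - (1 + ε) * ∑ j, ((Ft u p) ^ 2 - ch p (Pi.single j 1 : P d) * (Ft u p) ^ 2) := by
    intro p
    have hFtrans : Ftrans u p = Ft u p := rfl
    have hzz : (d : ℝ) * zeta d p = ∑ j, (1 - ch p (Pi.single j 1 : P d)) := zeta_expand p
    rw [hFtrans]
    have expand : (∑ j, ((Ft u p) ^ 2 - ch p (Pi.single j 1 : P d) * (Ft u p) ^ 2))
        = (∑ j, (1 - ch p (Pi.single j 1 : P d))) * (Ft u p) ^ 2 := by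
      rw [Finset.sum_mul]
      exact Finset.sum_congr rfl fun j _ => by ring
    rw [expand, ← hzz]
    ring
  rw [integral_congr_ae (Filter.Eventually.of_forall hIntegrand)]
  have h1 : IntegrableOn (fun p => 2 * Ft u p) (cube d) :=
    integrableOn_cube (continuous_const.mul hFt_cont)
  have h2 : IntegrableOn (fun p => 2 * lam * (Ft u p) ^ 2) (cube d) :=
    integrableOn_cube (continuous_const.mul (hFt_cont.pow 2))
  have h12 : IntegrableOn (fun p => 2 * Ft u p - 2 * lam * (Ft u p) ^ 2) (cube d) := h1.sub h2
  have h3 : IntegrableOn (fun p => (1 + ε) *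
      ∑ j, ((Ft u p) ^ 2 - ch p (Pi.single j 1 : P d) * (Ft u p) ^ 2)) (cube d) := by
    apply integrableOn_cube
    exact continuous_const.mul (continuous_finset_sum _ fun j _ =>
      (hFt_cont.pow 2).sub ((continuous_ch _).mul (hFt_cont.pow 2)))
  rw [MeasureTheory.integral_sub h12 h3, MeasureTheory.integral_sub h1 h2,
    MeasureTheory.integral_const_mul, MeasureTheory.integral_const_mul,
    MeasureTheory.integral_const_mul]
  rw [integral_Ft hsum, integral_Ft_sq hsum heven]
  rw [MeasureTheory.integral_finset_sum Finset.univ (fun j _ => hterm_int j)]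
  have hsumval : ∀ j : Fin d, (∫ p in cube d,
      ((Ft u p) ^ 2 - ch p (Pi.single j 1 : P d) * (Ft u p) ^ 2)) = S - T j := by
    intro j
    rw [MeasureTheory.integral_sub hsq_int (hch_int j), integral_Ft_sq hsum heven,
      integral_ch_mul_sq hsum heven (Pi.single j 1)]
  rw [Finset.sum_congr rfl fun j _ => hsumval j]
  -- now pure arithmetic
  have hsplit : (∑ j, (S - T j)) = (S - T 0) + ∑ j ∈ Finset.univ.erase (0 : Fin d), (S - T j) :=
    (Finset.add_sum_erase Finset.univ _ (Finset.mem_univ 0)).symm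
  have hST : ∀ j, S - T j = G j / 2 := fun j => by have := hGT j; linarith
  have hS0 : u 0 ^ 2 ≤ S := Summable.le_tsum (summable_sq hsum) 0 fun _ _ => sq_nonneg _
  have hGnn : ∀ j, 0 ≤ G j := fun j => tsum_nonneg fun x => sq_nonneg _
  have hEnn : 0 ≤ ∑ j ∈ Finset.univ.erase (0 : Fin d), G j :=
    Finset.sum_nonneg fun j _ => hGnn j
  have hErw : ∑ j ∈ Finset.univ.erase (0 : Fin d), (S - T j)
      = (∑ j ∈ Finset.univ.erase (0 : Fin d), G j) / 2 := by
    rw [Finset.sum_congr rfl fun j _ => hST j, ← Finset.sum_div]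
  rw [hsplit, hErw, hST 0]
  have hmul : 0 ≤ lam * (S - u 0 ^ 2) := mul_nonneg hlam.le (by linarith)
  set E := ∑ j ∈ Finset.univ.erase (0 : Fin d), G j with hE
  nlinarith [hε.le, hEnn, hmul]
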